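/- arXiv:0910.5396 — 6 statements merged into one kernel-verified Lean document; each statement's English description precedes it below -/
import Mathlib

section
/- Let p, q ∈ ρ(X) lie in the same connected component of B(X) and let x, y ∈ X* lie in the same connected component of B(X). If p divides x and q divides y, then p and x lie in the same connected component of B(X); moreover the vertex set of this component is the union of the vertex set of the connected component of p in Δ(X) and the vertex set of the connected component of x in Γ(X), and d_B(p,q) − d_B(x,y) ∈ {−2, 0, 2}. -/
open SimpleGraph

/-- The set of primes dividing at least one element of `X`. -/
def rho (X : Set ℕ) : Set ℕ := {p | p.Prime ∧ ∃ x ∈ X, p ∣ x}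

/-- `X* = X \ {1}`. -/
def Xstar (X : Set ℕ) : Set ℕ := X \ {1}

/-- The bipartite divisor graph `B(X)` on the disjoint union `ρ(X) ⊔ X*`:
`p ∈ ρ(X)` and `x ∈ X*` are adjacent iff `p ∣ x`. -/
def BGraph (X : Set ℕ) : SimpleGraph (↥(rho X) ⊕ ↥(Xstar X)) where
  Adj u v :=
    match u, v with
    | Sum.inl p, Sum.inr x => (p : ℕ) ∣ (x : ℕ)
    | Sum.inr x, Sum.inl p => (p : ℕ) ∣ (x : ℕ)
    | _, _ => False
  symm := by constructor; rintro (p | x) (q | y) h <;> exact h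
  loopless := by constructor; rintro (p | x) h <;> exact h

/-- The prime vertex graph `Δ(X)` on `ρ(X)`: distinct primes `p, q` are
adjacent iff `p*q` divides some element of `X`. -/
def DeltaGraph (X : Set ℕ) : SimpleGraph ↥(rho X) where
  Adj p q := p ≠ q ∧ ∃ x ∈ X, (p : ℕ) * (q : ℕ) ∣ x
  symm := by
    constructor
    rintro p q ⟨hne, x, hx, hdvd⟩
    exact ⟨hne.symm, x, hx, by rwa [mul_comm]⟩
  loopless := by constructor; rintro p ⟨hne, -⟩; exact hne rfl

/-- The common divisor graph `Γ(X)` on `X*`: distinct `x, y` are adjacent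
iff `gcd(x, y) > 1`. -/
def GammaGraph (X : Set ℕ) : SimpleGraph ↥(Xstar X) where
  Adj x y := x ≠ y ∧ 1 < Nat.gcd (x : ℕ) (y : ℕ)
  symm := by
    constructor
    rintro x y ⟨hne, h⟩
    exact ⟨hne.symm, by rwa [Nat.gcd_comm]⟩
  loopless := by constructor; rintro x ⟨hne, -⟩; exact hne rfl

/-! Every edge of `B(X)` joins a prime `a` to a multiple `z` of it, so walks in `B(X)` project to
walks in `Δ(X)` (send each element to one of its prime factors; primes dividing a common `z` are
`Δ`-adjacent) and to walks in `Γ(X)` (send each prime to one of its multiples; multiples of a common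
prime are `Γ`-adjacent); conversely every edge of `Δ(X)` or `Γ(X)` is a path of length two in `B(X)`.
Since `B(X)` is bipartite, `d_B(p,q)` and `d_B(x,y)` are even, and prolonging a shortest path by the
edges `x - p` and `q - y` (or `p - x` and `y - q`) shows that they differ by at most two. -/

namespace SimpleGraph

variable {V W : Type*} {G : SimpleGraph V}

theorem Reachable.map_of_adj {H : SimpleGraph W} {f : V → W}
    (hf : ∀ u v, G.Adj u v → H.Reachable (f u) (f v)) {u v : V} (h : G.Reachable u v) :
    H.Reachable (f u) (f v) := by
  rw [reachable_iff_reflTransGen] at h ⊢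
  exact h.lift' f fun a b hab => (reachable_iff_reflTransGen _ _).mp (hf a b hab)

theorem dist_le_dist_add_two {u u' v v' : V} (hu : G.Adj u' u) (hv : G.Adj v v')
    (h : G.Reachable u v) : G.dist u' v' ≤ G.dist u v + 2 := by
  obtain ⟨w, hw⟩ := h.exists_walk_length_eq_dist
  simpa [hw] using dist_le (Walk.cons hu (w.concat hv))

theorem Coloring.even_dist (c : G.Coloring Bool) {u v : V} (h : c u = c v) :
    Even (G.dist u v) := by
  by_cases hr : G.Reachable u v
  · obtain ⟨w, hw⟩ := hr.exists_walk_length_eq_dist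
    rw [← hw, c.even_length_iff_congr]
    exact Bool.coe_iff_coe.mpr h
  · rw [dist_eq_zero_of_not_reachable hr]
    exact ⟨0, rfl⟩

theorem Coloring.dist_sub_dist_mem (c : G.Coloring Bool) {u u' v v' : V}
    (hu : G.Adj u u') (hv : G.Adj v v') (huv : c u = c v) (h : G.Reachable u v) :
    (G.dist u v : ℤ) - G.dist u' v' ∈ ({-2, 0, 2} : Set ℤ) := by
  have h' : G.Reachable u' v' := hu.symm.reachable.trans (h.trans hv.reachable)
  have hle := dist_le_dist_add_two hu.symm hv h
  have hge := dist_le_dist_add_two hu hv.symm h'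
  obtain ⟨k, hk⟩ := c.even_dist huv
  have hcuv' : c u' = c v' := by
    have hcu := c.valid hu
    have hcv := c.valid hv
    revert huv hcu hcv
    cases c u <;> cases c v <;> cases c u' <;> cases c v' <;> decide
  obtain ⟨l, hl⟩ := c.even_dist hcuv'
  simp only [Set.mem_insert_iff, Set.mem_singleton_iff]
  omega

end SimpleGraph

section DivisorGraphs

variable {X : Set ℕ}

theorem mem_Xstar_of_prime_dvd {p z : ℕ} (hp : p.Prime) (hz : z ∈ X) (h : p ∣ z) :
    z ∈ Xstar X :=
  ⟨hz, fun h1 => hp.ne_one (Nat.dvd_one.mp (h1 ▸ h))⟩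

def minPrimeFactor (z : Xstar X) : rho X :=
  ⟨(z : ℕ).minFac, Nat.minFac_prime z.2.2, z, z.2.1, Nat.minFac_dvd _⟩

theorem minPrimeFactor_dvd (z : Xstar X) : (minPrimeFactor z : ℕ) ∣ z :=
  Nat.minFac_dvd _

noncomputable def someMultiple (p : rho X) : Xstar X :=
  ⟨p.2.2.choose, mem_Xstar_of_prime_dvd p.2.1 p.2.2.choose_spec.1 p.2.2.choose_spec.2⟩

theorem dvd_someMultiple (p : rho X) : (p : ℕ) ∣ someMultiple p :=
  p.2.2.choose_spec.2

theorem BGraph.adj_inl_inr {p : rho X} {z : Xstar X} :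
    (BGraph X).Adj (.inl p) (.inr z) ↔ (p : ℕ) ∣ z :=
  Iff.rfl

def BGraph.sideColoring : (BGraph X).Coloring Bool :=
  Coloring.mk Sum.isLeft (by rintro (p | z) (q | w) h <;> simp_all [BGraph])

theorem DeltaGraph.reachable_of_dvd {z : ℕ} (hz : z ∈ X) {a b : rho X} (ha : (a : ℕ) ∣ z)
    (hb : (b : ℕ) ∣ z) : (DeltaGraph X).Reachable a b := by
  by_cases hab : a = b
  · exact hab ▸ Reachable.refl a
  have hcop : Nat.Coprime a b :=
    (Nat.coprime_primes a.2.1 b.2.1).mpr fun h => hab (Subtype.ext h)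
  exact Adj.reachable ⟨hab, z, hz, hcop.mul_dvd_of_dvd_of_dvd ha hb⟩

theorem GammaGraph.reachable_of_dvd {z w : Xstar X} {p : ℕ} (hp : 1 < p) (hz : p ∣ z)
    (hw : p ∣ w) : (GammaGraph X).Reachable z w := by
  by_cases hzw : z = w
  · exact hzw ▸ Reachable.refl z
  -- `gcd z w = 0` would force `z = w = 0`
  have hgcd : Nat.gcd z w ≠ 0 := fun h => hzw (Subtype.ext ((Nat.gcd_eq_zero_iff.mp h).1.trans
    (Nat.gcd_eq_zero_iff.mp h).2.symm))
  exact Adj.reachable ⟨hzw, hp.trans_le (Nat.le_of_dvd (Nat.pos_of_ne_zero hgcd)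
    (Nat.dvd_gcd hz hw))⟩

theorem BGraph.reachable_inl_of_deltaGraph {a b : rho X} (h : (DeltaGraph X).Reachable a b) :
    (BGraph X).Reachable (.inl a) (.inl b) := by
  refine h.map_of_adj (f := Sum.inl) fun c d hadj => ?_
  obtain ⟨_, t, ht, hcd⟩ := hadj
  have htX : t ∈ Xstar X := mem_Xstar_of_prime_dvd c.2.1 ht (dvd_of_mul_right_dvd hcd)
  have hc : (BGraph X).Adj (.inl c) (.inr ⟨t, htX⟩) := dvd_of_mul_right_dvd hcd
  have hd : (BGraph X).Adj (.inl d) (.inr ⟨t, htX⟩) := dvd_of_mul_left_dvd hcd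
  exact hc.reachable.trans hd.symm.reachable

theorem BGraph.reachable_inr_of_gammaGraph {z w : Xstar X}
    (h : (GammaGraph X).Reachable z w) : (BGraph X).Reachable (.inr z) (.inr w) := by
  refine h.map_of_adj (f := Sum.inr) fun c d hadj => ?_
  obtain ⟨_, hcd⟩ := hadj
  obtain ⟨r, hr, hrcd⟩ := Nat.exists_prime_and_dvd hcd.ne'
  have hrc : r ∣ c := hrcd.trans (Nat.gcd_dvd_left _ _)
  have hc : (BGraph X).Adj (.inl ⟨r, hr, c, c.2.1, hrc⟩) (.inr c) := hrc
  have hd : (BGraph X).Adj (.inl ⟨r, hr, c, c.2.1, hrc⟩) (.inr d) :=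
    hrcd.trans (Nat.gcd_dvd_right _ _)
  exact hc.symm.reachable.trans hd.reachable

theorem DeltaGraph.reachable_of_bGraph {u v : rho X ⊕ Xstar X}
    (h : (BGraph X).Reachable u v) :
    (DeltaGraph X).Reachable (u.elim id minPrimeFactor) (v.elim id minPrimeFactor) := by
  have key (a : rho X) (z : Xstar X) (haz : (a : ℕ) ∣ z) :
      (DeltaGraph X).Reachable a (minPrimeFactor z) :=
    reachable_of_dvd z.2.1 haz (minPrimeFactor_dvd z)
  refine h.map_of_adj ?_
  rintro (a | z) (b | w) hadj
  exacts [hadj.elim, key a w hadj, (key b z hadj).symm, hadj.elim]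

theorem GammaGraph.reachable_of_bGraph {u v : rho X ⊕ Xstar X}
    (h : (BGraph X).Reachable u v) :
    (GammaGraph X).Reachable (u.elim someMultiple id) (v.elim someMultiple id) := by
  have key (a : rho X) (z : Xstar X) (haz : (a : ℕ) ∣ z) :
      (GammaGraph X).Reachable (someMultiple a) z :=
    reachable_of_dvd a.2.1.one_lt (dvd_someMultiple a) haz
  refine h.map_of_adj ?_
  rintro (a | z) (b | w) hadj
  exacts [hadj.elim, key a w hadj, (key b z hadj).symm, hadj.elim]

theorem BGraph.reachable_inl_iff {p : rho X} {x : Xstar X} (hpx : (p : ℕ) ∣ x)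
    (v : rho X ⊕ Xstar X) :
    (BGraph X).Reachable v (.inl p) ↔
      (∃ r : rho X, v = .inl r ∧ (DeltaGraph X).Reachable r p) ∨
        (∃ z : Xstar X, v = .inr z ∧ (GammaGraph X).Reachable z x) := by
  have hxp : (BGraph X).Reachable (.inr x) (.inl p) := (adj_inl_inr.mpr hpx).symm.reachable
  constructor
  · intro h
    rcases v with r | z
    · exact .inl ⟨r, rfl, DeltaGraph.reachable_of_bGraph h⟩
    · exact .inr ⟨z, rfl, GammaGraph.reachable_of_bGraph (h.trans hxp.symm)⟩
  · rintro (⟨r, rfl, hr⟩ | ⟨z, rfl, hz⟩)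
    · exact reachable_inl_of_deltaGraph hr
    · exact (reachable_inr_of_gammaGraph hz).trans hxp

end DivisorGraphs

theorem stmt_3_general (X : Set ℕ) (p q : ↥(rho X)) (x y : ↥(Xstar X))
    (hpq : (BGraph X).Reachable (Sum.inl p) (Sum.inl q))
    (hpx : (p : ℕ) ∣ (x : ℕ)) (hqy : (q : ℕ) ∣ (y : ℕ)) :
    (BGraph X).Reachable (Sum.inl p) (Sum.inr x) ∧
    (∀ v : ↥(rho X) ⊕ ↥(Xstar X),
      (BGraph X).Reachable v (Sum.inl p) ↔
        ((∃ r : ↥(rho X), v = Sum.inl r ∧ (DeltaGraph X).Reachable r p) ∨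
         (∃ z : ↥(Xstar X), v = Sum.inr z ∧ (GammaGraph X).Reachable z x))) ∧
    (((BGraph X).dist (Sum.inl p) (Sum.inl q) : ℤ) -
        ((BGraph X).dist (Sum.inr x) (Sum.inr y) : ℤ) ∈ ({-2, 0, 2} : Set ℤ)) :=
  ⟨(BGraph.adj_inl_inr.mpr hpx).reachable, BGraph.reachable_inl_iff hpx,
    BGraph.sideColoring.dist_sub_dist_mem hpx hqy rfl hpq⟩

theorem stmt_3 (X : Set ℕ) (hne : X.Nonempty) (hpos : ∀ x ∈ X, 0 < x)
    (hX1 : X ≠ {1}) (p q : ↥(rho X)) (x y : ↥(Xstar X))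
    (hpq : (BGraph X).Reachable (Sum.inl p) (Sum.inl q))
    (hxy : (BGraph X).Reachable (Sum.inr x) (Sum.inr y))
    (hpx : (p : ℕ) ∣ (x : ℕ)) (hqy : (q : ℕ) ∣ (y : ℕ)) :
    (BGraph X).Reachable (Sum.inl p) (Sum.inr x) ∧
    (∀ v : ↥(rho X) ⊕ ↥(Xstar X),
      (BGraph X).Reachable v (Sum.inl p) ↔
        ((∃ r : ↥(rho X), v = Sum.inl r ∧ (DeltaGraph X).Reachable r p) ∨
         (∃ z : ↥(Xstar X), v = Sum.inr z ∧ (GammaGraph X).Reachable z x))) ∧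
    (((BGraph X).dist (Sum.inl p) (Sum.inl q) : ℤ) -
        ((BGraph X).dist (Sum.inr x) (Sum.inr y) : ℤ) ∈ ({-2, 0, 2} : Set ℤ)) :=
  stmt_3_general X p q x y hpq hpx hqy
end

section
/- The graphs B(X), Δ(X) and Γ(X) have equal numbers of connected components: n(B(X)) = n(Δ(X)) = n(Γ(X)). -/
open SimpleGraph

/-!
All three graphs come from the divisibility incidence between `ρ(X)` and `X*`: `B(X)` is its
incidence graph, while `Δ(X)` and `Γ(X)` join two vertices of one side exactly when they have a
common neighbour on the other side. For any incidence relation in which every vertex of the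
second side has a neighbour, the components of the incidence graph and of the graph on the first
side correspond: walks in the incidence graph project to walks on the first side by sending each
vertex of the second side to a chosen neighbour, and conversely an edge `a – a'` via `b` lifts to
the path `a – b – a'`. Both sides of the divisibility incidence have this property, since every
`x ≠ 1` (including `x = 0`) has a prime divisor and every `p ∈ ρ(X)` divides some `x ≠ 1`.
-/

namespace SimpleGraph

variable {V W : Type*} {G : SimpleGraph V} {H : SimpleGraph W}

theorem Reachable.lift_of_adj (f : V → W) (hf : ∀ ⦃v v'⦄, G.Adj v v' → H.Reachable (f v) (f v'))
    {v v' : V} (h : G.Reachable v v') : H.Reachable (f v) (f v') := by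
  rw [reachable_iff_reflTransGen] at h ⊢
  exact h.lift' f fun _ _ hvv' => (reachable_iff_reflTransGen _ _).mp (hf hvv')

def ConnectedComponent.equivOfReachable (f : V → W) (g : W → V)
    (hf : ∀ ⦃v v'⦄, G.Adj v v' → H.Reachable (f v) (f v'))
    (hg : ∀ ⦃w w'⦄, H.Adj w w' → G.Reachable (g w) (g w'))
    (hgf : ∀ v, G.Reachable (g (f v)) v) (hfg : ∀ w, H.Reachable (f (g w)) w) :
    G.ConnectedComponent ≃ H.ConnectedComponent where
  toFun := ConnectedComponent.lift (fun v => H.connectedComponentMk (f v))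
    fun _ _ p _ => ConnectedComponent.sound (p.reachable.lift_of_adj f hf)
  invFun := ConnectedComponent.lift (fun w => G.connectedComponentMk (g w))
    fun _ _ p _ => ConnectedComponent.sound (p.reachable.lift_of_adj g hg)
  left_inv := ConnectedComponent.ind fun v => ConnectedComponent.sound (hgf v)
  right_inv := ConnectedComponent.ind fun w => ConnectedComponent.sound (hfg w)

section Incidence

variable {α β : Type*} (r : α → β → Prop)

def incidenceGraph : SimpleGraph (α ⊕ β) where
  Adj u v :=
    match u, v with
    | .inl a, .inr b => r a b
    | .inr b, .inl a => r a b
    | _, _ => False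
  symm := ⟨by rintro (a | b) (a' | b') h <;> exact h⟩
  loopless := ⟨by rintro (a | b) h <;> exact h⟩

theorem incidenceGraph_adj_inl_inr {a : α} {b : β} :
    (incidenceGraph r).Adj (.inl a) (.inr b) ↔ r a b :=
  Iff.rfl

def leftProjGraph : SimpleGraph α where
  Adj a a' := a ≠ a' ∧ ∃ b, r a b ∧ r a' b
  symm := ⟨fun _ _ ⟨hne, b, hb, hb'⟩ => ⟨hne.symm, b, hb', hb⟩⟩
  loopless := ⟨fun _ h => h.1 rfl⟩

abbrev rightProjGraph : SimpleGraph β := leftProjGraph (flip r)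

def incidenceGraphFlipIso : incidenceGraph (flip r) ≃g incidenceGraph r where
  toEquiv := Equiv.sumComm β α
  map_rel_iff' := by rintro (b | a) (b' | a') <;> exact Iff.rfl

theorem leftProjGraph_reachable_of_rel {a a' : α} {b : β} (h : r a b) (h' : r a' b) :
    (leftProjGraph r).Reachable a a' := by
  by_cases hne : a = a'
  · exact hne ▸ Reachable.refl a
  · exact Adj.reachable ⟨hne, b, h, h'⟩

theorem nonempty_incidenceGraph_connectedComponent_equiv_left (hr : ∀ b, ∃ a, r a b) :
    Nonempty ((incidenceGraph r).ConnectedComponent ≃ (leftProjGraph r).ConnectedComponent) := by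
  choose s hs using hr
  refine ⟨ConnectedComponent.equivOfReachable (Sum.elim id s) Sum.inl ?_ ?_ ?_
    fun _ => Reachable.refl _⟩
  · rintro (a | b) (a' | b') h
    · exact h.elim
    · exact leftProjGraph_reachable_of_rel r h (hs b')
    · exact leftProjGraph_reachable_of_rel r (hs b) h
    · exact h.elim
  · rintro a a' ⟨-, b, h, h'⟩
    exact ((incidenceGraph_adj_inl_inr r).mpr h).reachable.trans
      ((incidenceGraph_adj_inl_inr r).mpr h').reachable.symm
  · rintro (a | b)
    · exact Reachable.refl _
    · exact ((incidenceGraph_adj_inl_inr r).mpr (hs b)).reachable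

theorem nonempty_incidenceGraph_connectedComponent_equiv_right (hr : ∀ a, ∃ b, r a b) :
    Nonempty ((incidenceGraph r).ConnectedComponent ≃ (rightProjGraph r).ConnectedComponent) :=
  (nonempty_incidenceGraph_connectedComponent_equiv_left (flip r) hr).map
    ((incidenceGraphFlipIso r).connectedComponentEquiv.symm.trans)

end Incidence

end SimpleGraph

theorem Nat.one_lt_gcd_iff_exists_prime_dvd {m n : ℕ} (h : 0 < m ∨ 0 < n) :
    1 < m.gcd n ↔ ∃ p, p.Prime ∧ p ∣ m ∧ p ∣ n := by
  have := Nat.gcd_pos_iff.mpr h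
  rw [← Nat.Prime.not_coprime_iff_dvd, Nat.Coprime]
  omega

theorem Nat.Prime.mul_dvd_iff_of_ne {p q n : ℕ} (hp : p.Prime) (hq : q.Prime) (hpq : p ≠ q) :
    p * q ∣ n ↔ p ∣ n ∧ q ∣ n :=
  ⟨fun h => ⟨dvd_of_mul_right_dvd h, dvd_of_mul_left_dvd h⟩,
    fun h => ((Nat.coprime_primes hp hq).mpr hpq).mul_dvd_of_dvd_of_dvd h.1 h.2⟩

section DivisorGraphs

variable {X : Set ℕ}

theorem mem_xstar_of_prime_dvd {p x : ℕ} (hp : p.Prime) (hx : x ∈ X) (hpx : p ∣ x) :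
    x ∈ Xstar X :=
  ⟨hx, fun h1 => hp.one_lt.ne' (Nat.dvd_one.mp (h1 ▸ hpx))⟩

variable (X)

abbrev divisorIncidence (p : rho X) (x : Xstar X) : Prop := (p : ℕ) ∣ x

theorem bGraph_eq_incidenceGraph : BGraph X = incidenceGraph (divisorIncidence X) := by
  ext (p | x) (q | y) <;> rfl

theorem deltaGraph_eq_leftProjGraph : DeltaGraph X = leftProjGraph (divisorIncidence X) := by
  ext p q
  refine and_congr_right fun hpq => ?_
  simp only [Nat.Prime.mul_dvd_iff_of_ne p.2.1 q.2.1 (Subtype.coe_injective.ne hpq)]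
  exact ⟨fun ⟨x, hx, hpx, hqx⟩ => ⟨⟨x, mem_xstar_of_prime_dvd p.2.1 hx hpx⟩, hpx, hqx⟩,
    fun ⟨x, hpx, hqx⟩ => ⟨x, x.2.1, hpx, hqx⟩⟩

theorem gammaGraph_eq_rightProjGraph : GammaGraph X = rightProjGraph (divisorIncidence X) := by
  ext x y
  refine and_congr_right fun hxy => ?_
  have hpos : 0 < (x : ℕ) ∨ 0 < (y : ℕ) := by
    have := Subtype.coe_injective.ne hxy
    omega
  rw [Nat.one_lt_gcd_iff_exists_prime_dvd hpos]
  exact ⟨fun ⟨p, hp, hpx, hpy⟩ => ⟨⟨p, hp, x, x.2.1, hpx⟩, hpx, hpy⟩,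
    fun ⟨p, hpx, hpy⟩ => ⟨p, p.2.1, hpx, hpy⟩⟩

theorem exists_rho_dvd (x : Xstar X) : ∃ p : rho X, (p : ℕ) ∣ x :=
  ⟨⟨(x : ℕ).minFac, Nat.minFac_prime x.2.2, x, x.2.1, Nat.minFac_dvd x⟩, Nat.minFac_dvd x⟩

theorem exists_xstar_dvd (p : rho X) : ∃ x : Xstar X, (p : ℕ) ∣ x :=
  let ⟨x, hx, hpx⟩ := p.2.2
  ⟨⟨x, mem_xstar_of_prime_dvd p.2.1 hx hpx⟩, hpx⟩

end DivisorGraphs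

theorem stmt_4_general (X : Set ℕ) :
    Nonempty ((BGraph X).ConnectedComponent ≃ (DeltaGraph X).ConnectedComponent) ∧
    Nonempty ((BGraph X).ConnectedComponent ≃ (GammaGraph X).ConnectedComponent) := by
  rw [bGraph_eq_incidenceGraph, deltaGraph_eq_leftProjGraph, gammaGraph_eq_rightProjGraph]
  exact ⟨nonempty_incidenceGraph_connectedComponent_equiv_left _ (exists_rho_dvd X),
    nonempty_incidenceGraph_connectedComponent_equiv_right _ (exists_xstar_dvd X)⟩

theorem stmt_4 (X : Set ℕ) (hne : X.Nonempty) (hpos : ∀ x ∈ X, 0 < x)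
    (hX1 : X ≠ {1}) :
    Nonempty ((BGraph X).ConnectedComponent ≃ (DeltaGraph X).ConnectedComponent) ∧
    Nonempty ((BGraph X).ConnectedComponent ≃ (GammaGraph X).ConnectedComponent) :=
  stmt_4_general X
end

section
/- Let X be finite. Then either (i) diam(B(X)) = 2·max{diam(Δ(X)), diam(Γ(X))} and |diam(Δ(X)) − diam(Γ(X))| ≤ 1, or (ii) diam(Δ(X)) = diam(Γ(X)) = (diam(B(X)) − 1)/2. -/
/-!
Both `Δ(X)` and `Γ(X)` are halved graphs of the bipartite graph `B(X)`: two vertices on one side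
are adjacent exactly when they have a common neighbour. Hence distances in `B(X)` between vertices
on the same side are twice the distances in `Δ(X)` or `Γ(X)`, giving `diam B ≥ 2 max(dΔ, dΓ)`.
As `B(X)` has no isolated vertices, a prime `p` and an element `x` are joined through a prime
divisor of `x` or through an element divisible by `p`, so `d(p, x) ≤ 2 min(dΔ, dΓ) + 1`; the same
detour gives `|dΔ - dΓ| ≤ 1`. These bounds leave only the two stated cases.
-/

open SimpleGraph

/-- The diameter of a graph in the sense of Lewis: the maximum of the distances
between pairs of vertices lying in the same connected component. -/
noncomputable def gdiam {V : Type*} (G : SimpleGraph V) : ℕ :=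
  sSup {n : ℕ | ∃ u v : V, G.Reachable u v ∧ G.dist u v = n}

open Function Sum

section Diameter

variable {V : Type*} [Finite V] {G : SimpleGraph V}

lemma gdiam_le_iff {n : ℕ} : gdiam G ≤ n ↔ ∀ u v, G.dist u v ≤ n := by
  have hbdd : BddAbove {n : ℕ | ∃ u v, G.Reachable u v ∧ G.dist u v = n} :=
    ((Set.finite_range fun z : V × V => G.dist z.1 z.2).subset
      (by rintro _ ⟨u, v, -, rfl⟩; exact ⟨(u, v), rfl⟩)).bddAbove
  simp only [gdiam, csSup_le_iff' hbdd, Set.mem_ofPred_eq]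
  refine ⟨fun h u v => ?_, fun h _ ⟨u, v, _, huv⟩ => huv ▸ h u v⟩
  by_cases huv : G.Reachable u v
  · exact h _ ⟨u, v, huv, rfl⟩
  · simp [dist_eq_zero_of_not_reachable huv]

variable (G) in
lemma dist_le_gdiam (u v : V) : G.dist u v ≤ gdiam G :=
  gdiam_le_iff.1 le_rfl u v

end Diameter

namespace SimpleGraph

variable {V α β : Type*}

def halved (G : SimpleGraph V) (s : α → V) : SimpleGraph α where
  Adj a a' := a ≠ a' ∧ ∃ v, G.Adj (s a) v ∧ G.Adj v (s a')
  symm := by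
    constructor
    rintro a a' ⟨hne, v, h, h'⟩
    exact ⟨hne.symm, v, h'.symm, h.symm⟩
  loopless := by constructor; rintro a ⟨hne, -⟩; exact hne rfl

section Halved

variable {G : SimpleGraph V} {s : α → V}

@[simp]
lemma halved_adj {a a' : α} :
    (G.halved s).Adj a a' ↔ a ≠ a' ∧ ∃ v, G.Adj (s a) v ∧ G.Adj v (s a') :=
  Iff.rfl

lemma exists_walk_length_eq_two_mul {a a' : α} (w : (G.halved s).Walk a a') :
    ∃ W : G.Walk (s a) (s a'), W.length = 2 * w.length := by
  induction w with
  | nil => exact ⟨.nil, rfl⟩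
  | cons h _ ih =>
    obtain ⟨v, h₁, h₂⟩ := h.2
    obtain ⟨W, hW⟩ := ih
    exact ⟨.cons h₁ (.cons h₂ W), by simp only [Walk.length_cons, hW]; ring⟩

variable (hs : Injective s)
  (hside : ∀ u v, G.Adj u v → (u ∈ Set.range s ↔ v ∉ Set.range s))
include hs hside

lemma exists_halved_walk_two_mul_length_le {a a' : α} (w : G.Walk (s a) (s a')) :
    ∃ w' : (G.halved s).Walk a a', 2 * w'.length ≤ w.length := by
  generalize hu : s a = u at w
  induction hn : w.length using Nat.strong_induction_on generalizing a u with
  | _ n ih =>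
  cases w with
  | nil =>
    obtain rfl := hs hu
    exact ⟨.nil, by simp⟩
  | cons h₁ w₁ =>
    subst hu
    have hv := (hside _ _ h₁).1 ⟨a, rfl⟩
    cases w₁ with
    | nil => exact absurd ⟨a', rfl⟩ hv
    | cons h₂ w₂ =>
      obtain ⟨a'', rfl⟩ := not_not.1 (mt (hside _ _ h₂).2 hv)
      have hlen : w₂.length + 2 = n := by simpa only [Walk.length_cons] using hn
      obtain ⟨w', hw'⟩ := ih _ (by omega) (a := a'') _ rfl w₂ rfl
      by_cases ha : a = a''
      · subst ha
        exact ⟨w', by omega⟩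
      · refine ⟨.cons (halved_adj.2 ⟨ha, _, h₁, h₂⟩) w', ?_⟩
        simp only [Walk.length_cons]
        omega

lemma reachable_halved_iff {a a' : α} :
    G.Reachable (s a) (s a') ↔ (G.halved s).Reachable a a' :=
  ⟨fun ⟨w⟩ => (exists_halved_walk_two_mul_length_le hs hside w).elim fun w' _ => ⟨w'⟩,
    fun ⟨w⟩ => (exists_walk_length_eq_two_mul w).elim fun W _ => ⟨W⟩⟩

lemma dist_eq_two_mul_dist_halved (a a' : α) :
    G.dist (s a) (s a') = 2 * (G.halved s).dist a a' := by
  by_cases h : (G.halved s).Reachable a a'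
  · obtain ⟨w, hw⟩ := h.exists_walk_length_eq_dist
    obtain ⟨W, hW⟩ := exists_walk_length_eq_two_mul w
    obtain ⟨W', hW'⟩ := ((reachable_halved_iff hs hside).2 h).exists_walk_length_eq_dist
    obtain ⟨w', hw'⟩ := exists_halved_walk_two_mul_length_le hs hside W'
    have := dist_le W
    have := dist_le w'
    omega
  · rw [dist_eq_zero_of_not_reachable h,
      dist_eq_zero_of_not_reachable (mt (reachable_halved_iff hs hside).1 h)]

lemma two_mul_gdiam_halved_le [Finite V] [Finite α] : 2 * gdiam (G.halved s) ≤ gdiam G := by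
  suffices gdiam (G.halved s) ≤ gdiam G / 2 by omega
  refine gdiam_le_iff.2 fun a a' => ?_
  have := dist_le_gdiam G (s a) (s a')
  rw [dist_eq_two_mul_dist_halved hs hside] at this
  omega

end Halved

section Bipartite

variable {G : SimpleGraph (α ⊕ β)}
  (hl : ∀ a a', ¬G.Adj (inl a) (inl a')) (hr : ∀ b b', ¬G.Adj (inr b) (inr b'))
include hl hr

lemma mem_range_inl_iff_of_adj {u v : α ⊕ β} (h : G.Adj u v) :
    u ∈ Set.range inl ↔ v ∉ Set.range inl := by
  rcases u with a | b <;> rcases v with a' | b' <;> simp_all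

lemma mem_range_inr_iff_of_adj {u v : α ⊕ β} (h : G.Adj u v) :
    u ∈ Set.range inr ↔ v ∉ Set.range inr := by
  rcases u with a | b <;> rcases v with a' | b' <;> simp_all

lemma dist_inl_inl (a a' : α) : G.dist (inl a) (inl a') = 2 * (G.halved inl).dist a a' :=
  dist_eq_two_mul_dist_halved inl_injective (fun _ _ => mem_range_inl_iff_of_adj hl hr) a a'

lemma dist_inr_inr (b b' : β) : G.dist (inr b) (inr b') = 2 * (G.halved inr).dist b b' :=
  dist_eq_two_mul_dist_halved inr_injective (fun _ _ => mem_range_inr_iff_of_adj hl hr) b b'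

lemma dist_inl_inr_le_halved_inl [Finite α] (hβ : ∀ b, ∃ a, G.Adj (inl a) (inr b))
    (a : α) (b : β) :
    G.dist (inl a) (inr b) ≤ 2 * gdiam (G.halved inl) + 1 := by
  obtain ⟨a', h⟩ := hβ b
  calc G.dist (inl a) (inr b) ≤ G.dist (inl a) (inl a') + G.dist (inl a') (inr b) :=
        h.reachable.dist_triangle_right _
    _ ≤ 2 * gdiam (G.halved inl) + 1 := by
        rw [dist_inl_inl hl hr, dist_eq_one_iff_adj.2 h]
        gcongr
        exact dist_le_gdiam _ _ _

lemma dist_inl_inr_le_halved_inr [Finite β] (hα : ∀ a, ∃ b, G.Adj (inl a) (inr b))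
    (a : α) (b : β) :
    G.dist (inl a) (inr b) ≤ 2 * gdiam (G.halved inr) + 1 := by
  obtain ⟨b', h⟩ := hα a
  calc G.dist (inl a) (inr b) ≤ G.dist (inl a) (inr b') + G.dist (inr b') (inr b) :=
        h.reachable.dist_triangle_left _
    _ ≤ 2 * gdiam (G.halved inr) + 1 := by
        rw [dist_inr_inr hl hr, dist_eq_one_iff_adj.2 h]
        have := dist_le_gdiam (G.halved inr) b' b
        omega

lemma gdiam_halved_inl_le [Finite α] [Finite β] (hα : ∀ a, ∃ b, G.Adj (inl a) (inr b)) :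
    gdiam (G.halved inl) ≤ gdiam (G.halved inr) + 1 := by
  refine gdiam_le_iff.2 fun a a' => ?_
  obtain ⟨b, h⟩ := hα a'
  have htri : G.dist (inl a) (inl a') ≤ G.dist (inl a) (inr b) + G.dist (inr b) (inl a') :=
    h.symm.reachable.dist_triangle_right _
  rw [dist_inl_inl hl hr, dist_eq_one_iff_adj.2 h.symm] at htri
  have := dist_inl_inr_le_halved_inr hl hr hα a b
  omega

lemma gdiam_halved_inr_le [Finite α] [Finite β] (hβ : ∀ b, ∃ a, G.Adj (inl a) (inr b)) :
    gdiam (G.halved inr) ≤ gdiam (G.halved inl) + 1 := by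
  refine gdiam_le_iff.2 fun b b' => ?_
  obtain ⟨a, h⟩ := hβ b
  have htri : G.dist (inr b) (inr b') ≤ G.dist (inr b) (inl a) + G.dist (inl a) (inr b') :=
    h.symm.reachable.dist_triangle_left _
  rw [dist_inr_inr hl hr, dist_eq_one_iff_adj.2 h.symm] at htri
  have := dist_inl_inr_le_halved_inl hl hr hβ a b'
  omega

lemma gdiam_le_max [Finite α] [Finite β] (hα : ∀ a, ∃ b, G.Adj (inl a) (inr b))
    (hβ : ∀ b, ∃ a, G.Adj (inl a) (inr b)) :
    gdiam G ≤ max (2 * max (gdiam (G.halved inl)) (gdiam (G.halved inr)))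
      (2 * min (gdiam (G.halved inl)) (gdiam (G.halved inr)) + 1) := by
  have hmixed (a : α) (b : β) : G.dist (inl a) (inr b) ≤
      2 * min (gdiam (G.halved inl)) (gdiam (G.halved inr)) + 1 := by
    have := dist_inl_inr_le_halved_inl hl hr hβ a b
    have := dist_inl_inr_le_halved_inr hl hr hα a b
    omega
  refine gdiam_le_iff.2 ?_
  rintro (a | b) (a' | b')
  · have := dist_le_gdiam (G.halved inl) a a'
    rw [dist_inl_inl hl hr]
    omega
  · have := hmixed a b'
    omega
  · have := hmixed a' b
    rw [dist_comm]
    omega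
  · have := dist_le_gdiam (G.halved inr) b b'
    rw [dist_inr_inr hl hr]
    omega

theorem gdiam_halved_dichotomy [Finite α] [Finite β] (hα : ∀ a, ∃ b, G.Adj (inl a) (inr b))
    (hβ : ∀ b, ∃ a, G.Adj (inl a) (inr b)) :
    (gdiam G = 2 * max (gdiam (G.halved inl)) (gdiam (G.halved inr)) ∧
      ((gdiam (G.halved inl) : ℤ) - (gdiam (G.halved inr) : ℤ)).natAbs ≤ 1) ∨
    (gdiam (G.halved inl) = gdiam (G.halved inr) ∧
      2 * gdiam (G.halved inl) + 1 = gdiam G) := by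
  have := two_mul_gdiam_halved_le inl_injective (fun _ _ => mem_range_inl_iff_of_adj hl hr)
  have := two_mul_gdiam_halved_le inr_injective (fun _ _ => mem_range_inr_iff_of_adj hl hr)
  have := gdiam_halved_inl_le hl hr hα
  have := gdiam_halved_inr_le hl hr hβ
  have := gdiam_le_max hl hr hα hβ
  omega

end Bipartite

end SimpleGraph

section DivisorGraphs

variable {X : Set ℕ}

lemma rho_finite (hpos : ∀ x ∈ X, 0 < x) (hfin : X.Finite) : (rho X).Finite :=
  (hfin.biUnion fun x _ => x.primeFactors.finite_toSet).subset fun _ ⟨hp, x, hx, hpx⟩ =>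
    Set.mem_biUnion hx (Nat.mem_primeFactors.2 ⟨hp, hpx, (hpos x hx).ne'⟩)

lemma mem_Xstar_of_dvd {p x : ℕ} (hx : x ∈ X) (hp : p.Prime) (hpx : p ∣ x) : x ∈ Xstar X :=
  ⟨hx, fun h => hp.not_dvd_one (h ▸ hpx)⟩

@[simp]
lemma bGraph_adj_inl_inr {p : rho X} {x : Xstar X} :
    (BGraph X).Adj (inl p) (inr x) ↔ (p : ℕ) ∣ x :=
  Iff.rfl

@[simp]
lemma bGraph_adj_inr_inl {p : rho X} {x : Xstar X} :
    (BGraph X).Adj (inr x) (inl p) ↔ (p : ℕ) ∣ x :=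
  Iff.rfl

lemma bGraph_halved_inl : (BGraph X).halved inl = DeltaGraph X := by
  ext p q
  simp only [halved_adj, Sum.exists, bGraph_adj_inl_inr, bGraph_adj_inr_inl, DeltaGraph]
  refine and_congr_right fun hpq => ⟨?_, ?_⟩
  · rintro (⟨_, h, -⟩ | ⟨x, hpx, hqx⟩)
    · exact h.elim
    · have hcop : Nat.Coprime p q :=
        (Nat.coprime_primes p.2.1 q.2.1).2 (Subtype.coe_injective.ne hpq)
      exact ⟨x, x.2.1, hcop.mul_dvd_of_dvd_of_dvd hpx hqx⟩
  · rintro ⟨x, hx, hdvd⟩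
    have hpx : (p : ℕ) ∣ x := dvd_of_mul_right_dvd hdvd
    exact .inr ⟨⟨x, mem_Xstar_of_dvd hx p.2.1 hpx⟩, hpx, dvd_of_mul_left_dvd hdvd⟩

lemma bGraph_halved_inr : (BGraph X).halved inr = GammaGraph X := by
  ext x y
  simp only [halved_adj, Sum.exists, bGraph_adj_inl_inr, bGraph_adj_inr_inl, GammaGraph]
  refine and_congr_right fun hxy => ?_
  have hgcd : Nat.gcd x y ≠ 0 := fun h =>
    hxy (Subtype.ext ((Nat.gcd_eq_zero_iff.1 h).1.trans (Nat.gcd_eq_zero_iff.1 h).2.symm))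
  rw [show 1 < Nat.gcd x y ↔ ¬Nat.Coprime x y by unfold Nat.Coprime; omega,
    Nat.Prime.not_coprime_iff_dvd]
  constructor
  · rintro (⟨p, hpx, hpy⟩ | ⟨_, h, -⟩)
    · exact ⟨p, p.2.1, hpx, hpy⟩
    · exact h.elim
  · rintro ⟨p, hp, hpx, hpy⟩
    exact .inl ⟨⟨p, hp, x, x.2.1, hpx⟩, hpx, hpy⟩

lemma exists_bGraph_adj_of_rho (p : rho X) : ∃ x, (BGraph X).Adj (inl p) (inr x) :=
  let ⟨hp, x, hx, hpx⟩ := p.2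
  ⟨⟨x, mem_Xstar_of_dvd hx hp hpx⟩, hpx⟩

lemma exists_bGraph_adj_of_Xstar (x : Xstar X) : ∃ p, (BGraph X).Adj (inl p) (inr x) :=
  ⟨⟨(x : ℕ).minFac, Nat.minFac_prime x.2.2, x, x.2.1, Nat.minFac_dvd x⟩, Nat.minFac_dvd x⟩

end DivisorGraphs

theorem stmt_5_general (X : Set ℕ) (hpos : ∀ x ∈ X, 0 < x) (hfin : X.Finite) :
    (gdiam (BGraph X) = 2 * max (gdiam (DeltaGraph X)) (gdiam (GammaGraph X)) ∧
      ((gdiam (DeltaGraph X) : ℤ) - (gdiam (GammaGraph X) : ℤ)).natAbs ≤ 1) ∨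
    (gdiam (DeltaGraph X) = gdiam (GammaGraph X) ∧
      2 * gdiam (DeltaGraph X) + 1 = gdiam (BGraph X)) := by
  have : Finite (rho X) := (rho_finite hpos hfin).to_subtype
  have : Finite (Xstar X) := (hfin.subset Set.sdiff_subset).to_subtype
  rw [← bGraph_halved_inl, ← bGraph_halved_inr]
  exact gdiam_halved_dichotomy (fun _ _ => id) (fun _ _ => id) exists_bGraph_adj_of_rho
    exists_bGraph_adj_of_Xstar

theorem stmt_5 (X : Set ℕ) (hne : X.Nonempty) (hpos : ∀ x ∈ X, 0 < x)
    (hX1 : X ≠ {1}) (hfin : X.Finite) :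
    (gdiam (BGraph X) = 2 * max (gdiam (DeltaGraph X)) (gdiam (GammaGraph X)) ∧
      ((gdiam (DeltaGraph X) : ℤ) - (gdiam (GammaGraph X) : ℤ)).natAbs ≤ 1) ∨
    (gdiam (DeltaGraph X) = gdiam (GammaGraph X) ∧
      2 * gdiam (DeltaGraph X) + 1 = gdiam (BGraph X)) :=
  stmt_5_general X hpos hfin
end

section
/- If Δ(X) contains a complete subgraph K4 on four vertices, then B(X) contains a subgraph isomorphic to one of: the complete bipartite graph K_{1,4}; the incidence graph Inc(K4) of the complete graph K4; the graph 𝒦; or the graph 𝒢. -/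
open SimpleGraph

/-- The incidence graph of a graph `G`: the bipartite graph on `V ⊔ E(G)` in which
a vertex `v` and an edge `e` are adjacent iff `v` is an endpoint of `e`. -/
def IncGraph {V : Type*} (G : SimpleGraph V) : SimpleGraph (V ⊕ ↥G.edgeSet) where
  Adj u w :=
    match u, w with
    | Sum.inl v, Sum.inr e => v ∈ (e : Sym2 V)
    | Sum.inr e, Sum.inl v => v ∈ (e : Sym2 V)
    | _, _ => False
  symm := by constructor; rintro (v | e) (v' | e') h <;> exact h
  loopless := by constructor; rintro (v | e) h <;> exact h

/-- `G` contains a subgraph isomorphic to `H`: an injective map from the vertices of `H`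
to the vertices of `G` carrying edges of `H` to edges of `G`. -/
def ContainsSub {V W : Type*} (G : SimpleGraph V) (H : SimpleGraph W) : Prop :=
  ∃ f : W → V, Function.Injective f ∧ ∀ u v, H.Adj u v → G.Adj (f u) (f v)

/-- The bipartite graph `𝒦` with parts `{a1,a2,a3,a4}` and `{b1,b2,b3}` and edges
`b1a1, b1a2, b1a3, b2a1, b2a2, b2a4, b3a3, b3a4`. -/
def graphK : SimpleGraph (Fin 4 ⊕ Fin 3) where
  Adj u v :=
    match u, v with
    | Sum.inl a, Sum.inr b =>
        ((b : ℕ), (a : ℕ)) ∈ [(0, 0), (0, 1), (0, 2), (1, 0), (1, 1), (1, 3), (2, 2), (2, 3)]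
    | Sum.inr b, Sum.inl a =>
        ((b : ℕ), (a : ℕ)) ∈ [(0, 0), (0, 1), (0, 2), (1, 0), (1, 1), (1, 3), (2, 2), (2, 3)]
    | _, _ => False
  symm := by constructor; rintro (a | b) (a' | b') h <;> exact h
  loopless := by constructor; rintro (a | b) h <;> exact h

/-- The bipartite graph `𝒢` with parts `{a1,a2,a3,a4}` and `{b1,b2,b3,b4}` and edges
`b1a1, b1a2, b1a3, b2a1, b2a4, b3a2, b3a4, b4a3, b4a4`. -/
def graphG : SimpleGraph (Fin 4 ⊕ Fin 4) where
  Adj u v :=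
    match u, v with
    | Sum.inl a, Sum.inr b =>
        ((b : ℕ), (a : ℕ)) ∈
          [(0, 0), (0, 1), (0, 2), (1, 0), (1, 3), (2, 1), (2, 3), (3, 2), (3, 3)]
    | Sum.inr b, Sum.inl a =>
        ((b : ℕ), (a : ℕ)) ∈
          [(0, 0), (0, 1), (0, 2), (1, 0), (1, 3), (2, 1), (2, 3), (3, 2), (3, 3)]
    | _, _ => False
  symm := by constructor; rintro (a | b) (a' | b') h <;> exact h
  loopless := by constructor; rintro (a | b) h <;> exact h

/-!
Let `q` be a copy of `K₄` in `Δ(X)`; any two of the primes `q i` divide a common element of `X*`.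
If one element is divisible by all four, `B(X)` contains `K_{1,4}`. If some `y` is divisible by
exactly three, say all but `q 3`, pick for `i = 0, 1, 2` a common multiple `zᵢ` of `q i` and
`q 3`: if some `zᵢ` is divisible by a further `q j` with `j ≠ 3`, then `y`, `zᵢ` and `zₖ` (for
the remaining `k`) span `𝒦`; otherwise `y, z₀, z₁, z₂` span `𝒢`. In the remaining case every
element is divisible by at most two of the `q i`, so the common multiples of the six pairs are
pairwise distinct and span `Inc(K₄)`.
-/

open Function Sum

lemma containsSub_of_sumElim {γ δ V : Type*} {H : SimpleGraph (γ ⊕ δ)} {G : SimpleGraph V}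
    (hl : ∀ c c', ¬ H.Adj (inl c) (inl c')) (hr : ∀ d d', ¬ H.Adj (inr d) (inr d'))
    {f : γ → V} {g : δ → V} (hf : Injective f) (hg : Injective g) (hfg : ∀ c d, f c ≠ g d)
    (hadj : ∀ c d, H.Adj (inl c) (inr d) → G.Adj (f c) (g d)) : ContainsSub G H := by
  refine ⟨Sum.elim f g, hf.sumElim hg hfg, ?_⟩
  rintro (c | d) (c' | d') h
  · exact absurd h (hl c c')
  · exact hadj c d' h
  · exact (hadj c' d h.symm).symm
  · exact absurd h (hr d d')

lemma Fin.exists_perm_map_zero_one_three {i j : Fin 4} (hij : i ≠ j) (hi : i ≠ 3)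
    (hj : j ≠ 3) : ∃ σ : Equiv.Perm (Fin 4), σ 0 = i ∧ σ 1 = j ∧ σ 3 = 3 := by
  revert i j; decide

lemma Sym2.exists_forall_ne_mem_or_mem_fin_four :
    ∀ e e' : Sym2 (Fin 4), ¬ e.IsDiag → ¬ e'.IsDiag → e ≠ e' →
      ∃ m, ∀ j ≠ m, j ∈ e ∨ j ∈ e' := by
  decide

section Configurations

variable {α β : Type*} {G : SimpleGraph (α ⊕ β)}

lemma containsSub_completeBipartiteGraph_of_forall_adj {ι : Type*} {v : ι → α}
    (hv : Injective v) {x : β} (hx : ∀ i, G.Adj (inl (v i)) (inr x)) :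
    ContainsSub G (completeBipartiteGraph (Fin 1) ι) :=
  containsSub_of_sumElim (by simp) (by simp) (f := fun _ => inr x) (g := inl ∘ v)
    (fun _ _ _ => Subsingleton.elim _ _) (inl_injective.comp hv) (fun _ _ => inr_ne_inl)
    (fun _ i _ => (hx i).symm)

variable {v : Fin 4 → α}

lemma containsSub_incGraph_top_of_forall_exists_ne
    (hv : Injective v)
    (hcov : ∀ i j, i ≠ j → ∃ x, G.Adj (inl (v i)) (inr x) ∧ G.Adj (inl (v j)) (inr x))
    (hsparse : ∀ x m, ¬ ∀ j ≠ m, G.Adj (inl (v j)) (inr x)) :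
    ContainsSub G (IncGraph (⊤ : SimpleGraph (Fin 4))) := by
  have hedge : ∀ e : (⊤ : SimpleGraph (Fin 4)).edgeSet,
      ∃ x, ∀ i ∈ (e : Sym2 (Fin 4)), G.Adj (inl (v i)) (inr x) := by
    rintro ⟨e, he⟩
    induction e using Sym2.ind with
    | _ i j =>
      obtain ⟨x, hi, hj⟩ := hcov i j he
      exact ⟨x, fun k hk => by rcases Sym2.mem_iff.mp hk with rfl | rfl <;> assumption⟩
  choose w hw using hedge
  -- two distinct edges of `K₄` cover at least three vertices, so they need distinct witnesses
  have hw_inj : Injective w := by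
    intro e e' hee'
    by_contra hne
    obtain ⟨m, hm⟩ := Sym2.exists_forall_ne_mem_or_mem_fin_four e e'
      (not_isDiag_of_mem_edgeSet _ e.2) (not_isDiag_of_mem_edgeSet _ e'.2)
      (fun h => hne (Subtype.ext h))
    refine hsparse (w e) m fun j hj => ?_
    rcases hm j hj with h | h
    · exact hw e j h
    · exact hee' ▸ hw e' j h
  exact containsSub_of_sumElim (fun _ _ h => h) (fun _ _ h => h) (inl_injective.comp hv)
    (inr_injective.comp hw_inj) (fun _ _ => inl_ne_inr) (fun i e h => hw e i h)

lemma containsSub_graphK_of_adj (hv : Injective v)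
    (hcov : ∀ i j, i ≠ j → ∃ x, G.Adj (inl (v i)) (inr x) ∧ G.Adj (inl (v j)) (inr x))
    (hfull : ∀ x, ¬ ∀ i, G.Adj (inl (v i)) (inr x))
    {y z : β} (hy : ∀ j ≠ 3, G.Adj (inl (v j)) (inr y)) (hy3 : ¬ G.Adj (inl (v 3)) (inr y))
    (hz0 : G.Adj (inl (v 0)) (inr z)) (hz1 : G.Adj (inl (v 1)) (inr z))
    (hz3 : G.Adj (inl (v 3)) (inr z)) :
    ContainsSub G graphK := by
  have hz2 : ¬ G.Adj (inl (v 2)) (inr z) := fun h2 =>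
    hfull z fun j => by fin_cases j <;> assumption
  obtain ⟨u, hu2, hu3⟩ := hcov 2 3 (by decide)
  have hyz : y ≠ z := fun h => hy3 (h ▸ hz3)
  have hyu : y ≠ u := fun h => hy3 (h ▸ hu3)
  have hzu : z ≠ u := fun h => hz2 (h ▸ hu2)
  refine containsSub_of_sumElim (fun _ _ h => h) (fun _ _ h => h) (inl_injective.comp hv)
    (g := inr ∘ ![y, z, u]) (inr_injective.comp (List.nodup_ofFn.mp (by simp [*])))
    (fun _ _ => inl_ne_inr) fun c d h => ?_
  fin_cases c <;> fin_cases d <;>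
    first | exact hy _ (by decide) | assumption | simp [graphK] at h

lemma containsSub_graphG_of_adj (hv : Injective v)
    (hcov : ∀ i j, i ≠ j → ∃ x, G.Adj (inl (v i)) (inr x) ∧ G.Adj (inl (v j)) (inr x))
    {y : β} (hy : ∀ j ≠ 3, G.Adj (inl (v j)) (inr y)) (hy3 : ¬ G.Adj (inl (v 3)) (inr y))
    (hthin : ∀ x i j, i ≠ j → i ≠ 3 → j ≠ 3 → G.Adj (inl (v i)) (inr x) →
      G.Adj (inl (v j)) (inr x) → ¬ G.Adj (inl (v 3)) (inr x)) :
    ContainsSub G graphG := by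
  obtain ⟨z₀, hz₀0, hz₀3⟩ := hcov 0 3 (by decide)
  obtain ⟨z₁, hz₁1, hz₁3⟩ := hcov 1 3 (by decide)
  obtain ⟨z₂, hz₂2, hz₂3⟩ := hcov 2 3 (by decide)
  have hz₁0 : ¬ G.Adj (inl (v 0)) (inr z₁) := fun h =>
    hthin z₁ 0 1 (by decide) (by decide) (by decide) h hz₁1 hz₁3
  have hz₂0 : ¬ G.Adj (inl (v 0)) (inr z₂) := fun h =>
    hthin z₂ 0 2 (by decide) (by decide) (by decide) h hz₂2 hz₂3
  have hz₂1 : ¬ G.Adj (inl (v 1)) (inr z₂) := fun h =>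
    hthin z₂ 1 2 (by decide) (by decide) (by decide) h hz₂2 hz₂3
  have hyz₀ : y ≠ z₀ := fun h => hy3 (h ▸ hz₀3)
  have hyz₁ : y ≠ z₁ := fun h => hy3 (h ▸ hz₁3)
  have hyz₂ : y ≠ z₂ := fun h => hy3 (h ▸ hz₂3)
  have hz₀z₁ : z₀ ≠ z₁ := fun h => hz₁0 (h ▸ hz₀0)
  have hz₀z₂ : z₀ ≠ z₂ := fun h => hz₂0 (h ▸ hz₀0)
  have hz₁z₂ : z₁ ≠ z₂ := fun h => hz₂1 (h ▸ hz₁1)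
  refine containsSub_of_sumElim (fun _ _ h => h) (fun _ _ h => h) (inl_injective.comp hv)
    (g := inr ∘ ![y, z₀, z₁, z₂]) (inr_injective.comp (List.nodup_ofFn.mp (by simp [*])))
    (fun _ _ => inl_ne_inr) fun c d h => ?_
  fin_cases c <;> fin_cases d <;>
    first | exact hy _ (by decide) | assumption | simp [graphG] at h

lemma containsSub_graphK_or_graphG (hv : Injective v)
    (hcov : ∀ i j, i ≠ j → ∃ x, G.Adj (inl (v i)) (inr x) ∧ G.Adj (inl (v j)) (inr x))
    (hfull : ∀ x, ¬ ∀ i, G.Adj (inl (v i)) (inr x))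
    {y : β} (hy : ∀ j ≠ 3, G.Adj (inl (v j)) (inr y)) :
    ContainsSub G graphK ∨ ContainsSub G graphG := by
  have hy3 : ¬ G.Adj (inl (v 3)) (inr y) := fun h3 =>
    hfull y fun j => if hj : j = 3 then hj ▸ h3 else hy j hj
  by_cases hthick : ∃ x i j, i ≠ j ∧ i ≠ 3 ∧ j ≠ 3 ∧ G.Adj (inl (v i)) (inr x) ∧
      G.Adj (inl (v j)) (inr x) ∧ G.Adj (inl (v 3)) (inr x)
  · obtain ⟨z, i, j, hij, hi, hj, hzi, hzj, hz3⟩ := hthick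
    -- relabel so that `z` is adjacent to `0`, `1` and `3`
    obtain ⟨σ, hσ0, hσ1, hσ3⟩ := Fin.exists_perm_map_zero_one_three hij hi hj
    have hσ : ∀ k ≠ 3, σ k ≠ 3 := fun k hk => hσ3 ▸ σ.injective.ne hk
    left
    refine containsSub_graphK_of_adj (v := v ∘ σ) (y := y) (z := z) (hv.comp σ.injective)
      (fun i j hij => hcov _ _ (σ.injective.ne hij))
      (fun x hx => hfull x fun i => σ.apply_symm_apply i ▸ hx (σ.symm i))
      (fun k hk => hy _ (hσ k hk)) (by rwa [comp_apply, hσ3])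
      (by rwa [comp_apply, hσ0]) (by rwa [comp_apply, hσ1]) (by rwa [comp_apply, hσ3])
  · push Not at hthick
    exact Or.inr (containsSub_graphG_of_adj hv hcov hy hy3 hthick)

theorem containsSub_of_pairwise_exists_common_adj (hv : Injective v)
    (hcov : ∀ i j, i ≠ j → ∃ x, G.Adj (inl (v i)) (inr x) ∧ G.Adj (inl (v j)) (inr x)) :
    ContainsSub G (completeBipartiteGraph (Fin 1) (Fin 4)) ∨
    ContainsSub G (IncGraph (⊤ : SimpleGraph (Fin 4))) ∨
    ContainsSub G graphK ∨ ContainsSub G graphG := by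
  by_cases hfull : ∃ x, ∀ i, G.Adj (inl (v i)) (inr x)
  · obtain ⟨x, hx⟩ := hfull
    exact Or.inl (containsSub_completeBipartiteGraph_of_forall_adj hv hx)
  rw [not_exists] at hfull
  by_cases hthree : ∃ x m, ∀ j ≠ m, G.Adj (inl (v j)) (inr x)
  · obtain ⟨y, m, hy⟩ := hthree
    -- relabel so that the vertex missed by `y` is `3`
    let σ := Equiv.swap m 3
    refine Or.inr (Or.inr (containsSub_graphK_or_graphG (v := v ∘ σ) (y := y)
      (hv.comp σ.injective) (fun i j hij => hcov _ _ (σ.injective.ne hij))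
      (fun x hx => hfull x fun i => σ.apply_symm_apply i ▸ hx (σ.symm i))
      fun j hj => hy _ ?_))
    simpa [σ] using σ.injective.ne hj
  · simp only [not_exists] at hthree
    exact Or.inr (Or.inl (containsSub_incGraph_top_of_forall_exists_ne hv hcov hthree))

end Configurations

lemma DeltaGraph.Adj.exists_bGraph_adj {X : Set ℕ} {p q : rho X} (h : (DeltaGraph X).Adj p q) :
    ∃ x, (BGraph X).Adj (inl p) (inr x) ∧ (BGraph X).Adj (inl q) (inr x) := by
  obtain ⟨-, x, hxX, hdvd⟩ := h
  have hx1 : x ≠ 1 := fun hx => p.2.1.not_dvd_one (hx ▸ dvd_of_mul_right_dvd hdvd)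
  exact ⟨⟨x, hxX, hx1⟩, dvd_of_mul_right_dvd hdvd, dvd_of_mul_left_dvd hdvd⟩

theorem stmt_13_general (X : Set ℕ)
    (h : ContainsSub (DeltaGraph X) (⊤ : SimpleGraph (Fin 4))) :
    ContainsSub (BGraph X) (completeBipartiteGraph (Fin 1) (Fin 4)) ∨
    ContainsSub (BGraph X) (IncGraph (⊤ : SimpleGraph (Fin 4))) ∨
    ContainsSub (BGraph X) graphK ∨
    ContainsSub (BGraph X) graphG := by
  obtain ⟨q, hq, hadj⟩ := h
  exact containsSub_of_pairwise_exists_common_adj hq fun i j hij =>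
    DeltaGraph.Adj.exists_bGraph_adj (hadj i j hij)

theorem stmt_13 (X : Set ℕ) (hne : X.Nonempty) (hpos : ∀ x ∈ X, 0 < x)
    (hX1 : X ≠ {1})
    (h : ContainsSub (DeltaGraph X) (⊤ : SimpleGraph (Fin 4))) :
    ContainsSub (BGraph X) (completeBipartiteGraph (Fin 1) (Fin 4)) ∨
    ContainsSub (BGraph X) (IncGraph (⊤ : SimpleGraph (Fin 4))) ∨
    ContainsSub (BGraph X) graphK ∨
    ContainsSub (BGraph X) graphG :=
  stmt_13_general X h
end

section
/- If Γ(X) contains a complete subgraph K4 on four vertices, then B(X) contains a subgraph isomorphic to one of: the complete bipartite graph K_{1,4}; the incidence graph Inc(K4) of the complete graph K4; the graph 𝒦; or the graph 𝒢. -/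
open SimpleGraph

/-!
Let `x₀, …, x₃` be the vertices of the `K₄` in `Γ(X)`. If one prime divides all four, it is the
centre of a `K_{1,4}`. If a prime `p` divides exactly three of them, say all but `x₃`, pick primes
`qᵢ ∣ gcd(xᵢ, x₃)` for `i < 3`; these differ from `p`, and not all three coincide. Two of them
equal gives `𝒦`, all distinct gives `𝒢`. Otherwise every prime divides at most two of the `xᵢ`,
so primes chosen for the six edges are pairwise distinct and `B(X)` contains `Inc(K₄)`.
-/

open Function

def sharedPrime (m n : ℕ) : ℕ := (Nat.gcd m n).minFac

lemma sharedPrime_comm (m n : ℕ) : sharedPrime m n = sharedPrime n m := by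
  rw [sharedPrime, sharedPrime, Nat.gcd_comm]

lemma sharedPrime_prime {m n : ℕ} (h : 1 < Nat.gcd m n) : (sharedPrime m n).Prime :=
  Nat.minFac_prime h.ne'

lemma sharedPrime_dvd_left (m n : ℕ) : sharedPrime m n ∣ m :=
  (Nat.minFac_dvd _).trans (Nat.gcd_dvd_left _ _)

lemma sharedPrime_dvd_right (m n : ℕ) : sharedPrime m n ∣ n :=
  (Nat.minFac_dvd _).trans (Nat.gcd_dvd_right _ _)

section EdgePrime

variable {V : Type*} (x : V → ℕ)

def edgePrime : Sym2 V → ℕ :=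
  Sym2.lift ⟨fun v w => sharedPrime (x v) (x w), fun _ _ => sharedPrime_comm _ _⟩

lemma edgePrime_dvd {e : Sym2 V} {v : V} (hv : v ∈ e) : edgePrime x e ∣ x v := by
  induction e using Sym2.ind with
  | _ a b =>
    rcases Sym2.mem_iff.1 hv with rfl | rfl
    exacts [sharedPrime_dvd_left _ _, sharedPrime_dvd_right _ _]

variable {x} {G : SimpleGraph V}

lemma edgePrime_prime (hgcd : ∀ v w, G.Adj v w → 1 < Nat.gcd (x v) (x w)) {e : Sym2 V}
    (he : e ∈ G.edgeSet) : (edgePrime x e).Prime := by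
  induction e using Sym2.ind with
  | _ a b => exact sharedPrime_prime (hgcd a b he)

lemma mem_of_edgePrime_dvd
    (hthree : ∀ p : ℕ, p.Prime → ∀ a b c, a ≠ b → a ≠ c → b ≠ c → p ∣ x a → p ∣ x b → ¬ p ∣ x c)
    (hgcd : ∀ v w, G.Adj v w → 1 < Nat.gcd (x v) (x w)) {e : Sym2 V} (he : e ∈ G.edgeSet)
    {v : V} (hv : edgePrime x e ∣ x v) : v ∈ e := by
  induction e using Sym2.ind with
  | _ a b =>
    by_contra hve
    simp only [Sym2.mem_iff, not_or] at hve
    exact hthree _ (edgePrime_prime hgcd he) a b v (G.ne_of_adj he) (Ne.symm hve.1)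
      (Ne.symm hve.2) (edgePrime_dvd x (Sym2.mem_mk_left a b))
      (edgePrime_dvd x (Sym2.mem_mk_right a b)) hv

end EdgePrime

lemma mem_rho_of_dvd {X : Set ℕ} {p : ℕ} (hp : p.Prime) (x : Xstar X) (h : p ∣ x) : p ∈ rho X :=
  ⟨hp, x, x.2.1, h⟩

namespace BGraph

variable {X : Set ℕ}

theorem containsSub_of_dvd {α β : Type*} (H : SimpleGraph (α ⊕ β))
    (hl : ∀ a a', ¬ H.Adj (.inl a) (.inl a')) (hr : ∀ b b', ¬ H.Adj (.inr b) (.inr b'))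
    (x : α → Xstar X) (hx : Injective x) (P : β → ℕ) (hP : Injective P)
    (hρ : ∀ b, P b ∈ rho X) (hdvd : ∀ a b, H.Adj (.inl a) (.inr b) → P b ∣ x a) :
    ContainsSub (BGraph X) H := by
  refine ⟨Sum.elim (fun a => .inr (x a)) (fun b => .inl ⟨P b, hρ b⟩),
    (Sum.inr_injective.comp hx).sumElim
      (fun b b' h => hP (congrArg Subtype.val (Sum.inl_injective h))) (fun _ _ => nofun), ?_⟩
  rintro (a | b) (a' | b') h
  exacts [hl a a' h, hdvd a b' h, hdvd a' b (H.adj_symm h), hr b b' h]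

theorem containsSub_star {ι : Type*} (x : ι → Xstar X) (hx : Injective x) {p : ℕ}
    (hp : p ∈ rho X) (hpx : ∀ i, p ∣ x i) :
    ContainsSub (BGraph X) (completeBipartiteGraph (Fin 1) ι) := by
  refine ⟨Sum.elim (fun _ => .inl ⟨p, hp⟩) (fun i => .inr (x i)),
    (injective_of_subsingleton _).sumElim (Sum.inr_injective.comp hx)
      (fun _ _ => nofun), ?_⟩
  rintro (a | i) (a' | i') h
  exacts [absurd h (by simp), hpx i', hpx i, absurd h (by simp)]

theorem containsSub_incGraph {V : Type*} (G : SimpleGraph V) (x : V → Xstar X)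
    (hx : Injective x) (hgcd : ∀ v w, G.Adj v w → 1 < Nat.gcd (x v) (x w))
    (hthree : ∀ p : ℕ, p.Prime → ∀ a b c, a ≠ b → a ≠ c → b ≠ c →
      p ∣ x a → p ∣ x b → ¬ p ∣ x c) :
    ContainsSub (BGraph X) (IncGraph G) := by
  set Q := edgePrime (fun v => (x v : ℕ))
  refine containsSub_of_dvd _ (fun _ _ h => h) (fun _ _ h => h) x hx (fun e : G.edgeSet => Q e)
    ?_ (fun e => mem_rho_of_dvd (edgePrime_prime hgcd e.2) _ (edgePrime_dvd _ e.1.out_fst_mem))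
    (fun v e hv => edgePrime_dvd _ hv)
  rintro ⟨e, he⟩ ⟨e', he'⟩ (hQ : Q e = Q e')
  induction e' using Sym2.ind with
  | _ v w =>
    have hv : Q e ∣ x v := hQ ▸ edgePrime_dvd _ (Sym2.mem_mk_left v w)
    have hw : Q e ∣ x w := hQ ▸ edgePrime_dvd _ (Sym2.mem_mk_right v w)
    exact Subtype.ext ((Sym2.mem_and_mem_iff (G.ne_of_adj he')).1
      ⟨mem_of_edgePrime_dvd hthree hgcd he hv, mem_of_edgePrime_dvd hthree hgcd he hw⟩)

theorem containsSub_graphK (x : Fin 4 → Xstar X) (hx : Injective x) {p q r : ℕ}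
    (hp : p.Prime) (hq : q.Prime) (hr : r.Prime) (hpq : p ≠ q) (hpr : p ≠ r) (hqr : q ≠ r)
    (hp0 : p ∣ x 0) (hp1 : p ∣ x 1) (hp2 : p ∣ x 2) (hq0 : q ∣ x 0) (hq1 : q ∣ x 1)
    (hq3 : q ∣ x 3) (hr2 : r ∣ x 2) (hr3 : r ∣ x 3) :
    ContainsSub (BGraph X) graphK := by
  refine containsSub_of_dvd _ (fun _ _ h => h) (fun _ _ h => h) x hx ![p, q, r] ?_ ?_ ?_
  · intro i j h
    fin_cases i <;> fin_cases j <;> simp_all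
  · intro b
    fin_cases b
    exacts [mem_rho_of_dvd hp _ hp0, mem_rho_of_dvd hq _ hq0, mem_rho_of_dvd hr _ hr2]
  · intro a b h
    fin_cases a <;> fin_cases b <;> first | assumption | simp [graphK] at h

theorem containsSub_graphG (x : Fin 4 → Xstar X) (hx : Injective x) {p q r s : ℕ}
    (hp : p.Prime) (hq : q.Prime) (hr : r.Prime) (hs : s.Prime) (hpq : p ≠ q) (hpr : p ≠ r)
    (hps : p ≠ s) (hqr : q ≠ r) (hqs : q ≠ s) (hrs : r ≠ s)
    (hp0 : p ∣ x 0) (hp1 : p ∣ x 1) (hp2 : p ∣ x 2) (hq0 : q ∣ x 0) (hq3 : q ∣ x 3)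
    (hr1 : r ∣ x 1) (hr3 : r ∣ x 3) (hs2 : s ∣ x 2) (hs3 : s ∣ x 3) :
    ContainsSub (BGraph X) graphG := by
  refine containsSub_of_dvd _ (fun _ _ h => h) (fun _ _ h => h) x hx ![p, q, r, s] ?_ ?_ ?_
  · intro i j h
    fin_cases i <;> fin_cases j <;> simp_all
  · intro b
    fin_cases b
    exacts [mem_rho_of_dvd hp _ hp0, mem_rho_of_dvd hq _ hq0, mem_rho_of_dvd hr _ hr1,
      mem_rho_of_dvd hs _ hs2]
  · intro a b h
    fin_cases a <;> fin_cases b <;> first | assumption | simp [graphG] at h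

end BGraph

lemma Fin.exists_forall_ne_eq_or_eq_or_eq {a b c : Fin 4} (hab : a ≠ b) (hac : a ≠ c)
    (hbc : b ≠ c) : ∃ l, ∀ t ≠ l, t = a ∨ t = b ∨ t = c := by
  revert a b c; decide

section FourElements

variable {X : Set ℕ} {x : Fin 4 → Xstar X}

theorem containsSub_graphK_or_graphG_of_forall_ne_three (hx : Injective x)
    (hgcd : Pairwise fun i j => 1 < Nat.gcd (x i) (x j))
    (hall : ¬ ∃ r : ℕ, r.Prime ∧ ∀ t, r ∣ x t) {p : ℕ} (hp : p.Prime)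
    (hpx : ∀ t ≠ 3, p ∣ x t) :
    ContainsSub (BGraph X) graphK ∨ ContainsSub (BGraph X) graphG := by
  set q : Fin 4 → ℕ := fun i => sharedPrime (x i) (x 3)
  have hq : ∀ i ≠ 3, (q i).Prime := fun i hi => sharedPrime_prime (hgcd hi)
  have hqi : ∀ i, q i ∣ x i := fun i => sharedPrime_dvd_left _ _
  have hq3 : ∀ i, q i ∣ x 3 := fun i => sharedPrime_dvd_right _ _
  have hx3 : ¬ p ∣ x 3 := fun h3 =>
    hall ⟨p, hp, fun t => if ht : t = 3 then ht ▸ h3 else hpx t ht⟩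
  have hpq : ∀ i, p ≠ q i := fun i h => hx3 (h ▸ hq3 i)
  have hnot_all : ∀ r : ℕ, r.Prime → r ∣ x 0 → r ∣ x 1 → r ∣ x 2 → r ∣ x 3 → False :=
    fun r hr h0 h1 h2 h3 => hall ⟨r, hr, fun t => by fin_cases t <;> assumption⟩
  have hp0 := hpx 0 (by decide)
  have hp1 := hpx 1 (by decide)
  have hp2 := hpx 2 (by decide)
  have hq0' := hq 0 (by decide)
  have hq1' := hq 1 (by decide)
  have hq2' := hq 2 (by decide)
  by_cases h01 : q 0 = q 1
  · have h02 : q 0 ≠ q 2 := fun h02 =>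
      hnot_all _ hq0' (hqi 0) (h01 ▸ hqi 1) (h02 ▸ hqi 2) (hq3 0)
    exact .inl (BGraph.containsSub_graphK x hx hp hq0' hq2' (hpq 0) (hpq 2) h02 hp0 hp1 hp2
      (hqi 0) (h01 ▸ hqi 1) (hq3 0) (hqi 2) (hq3 2))
  -- relabel `x` so that the two equal `qᵢ` sit at positions `0` and `1`
  by_cases h02 : q 0 = q 2
  · exact .inl (BGraph.containsSub_graphK (x ∘ Equiv.swap 1 2) (hx.comp (Equiv.injective _))
      hp hq0' hq1' (hpq 0) (hpq 1) h01 hp0 hp2 hp1 (hqi 0) (h02 ▸ hqi 2) (hq3 0) (hqi 1) (hq3 1))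
  by_cases h12 : q 1 = q 2
  · exact .inl (BGraph.containsSub_graphK (x ∘ Equiv.swap 0 2) (hx.comp (Equiv.injective _))
      hp hq1' hq0' (hpq 1) (hpq 0) (Ne.symm h01) hp2 hp1 hp0 (h12 ▸ hqi 2) (hqi 1) (hq3 1)
      (hqi 0) (hq3 0))
  exact .inr (BGraph.containsSub_graphG x hx hp hq0' hq1' hq2' (hpq 0) (hpq 1) (hpq 2) h01 h02 h12
    hp0 hp1 hp2 (hqi 0) (hq3 0) (hqi 1) (hq3 1) (hqi 2) (hq3 2))

theorem containsSub_graphK_or_graphG_s14 (hx : Injective x)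
    (hgcd : Pairwise fun i j => 1 < Nat.gcd (x i) (x j))
    (hall : ¬ ∃ r : ℕ, r.Prime ∧ ∀ t, r ∣ x t) {p : ℕ} (hp : p.Prime) {a b c : Fin 4}
    (hab : a ≠ b) (hac : a ≠ c) (hbc : b ≠ c) (ha : p ∣ x a) (hb : p ∣ x b) (hc : p ∣ x c) :
    ContainsSub (BGraph X) graphK ∨ ContainsSub (BGraph X) graphG := by
  obtain ⟨l, hl⟩ := Fin.exists_forall_ne_eq_or_eq_or_eq hab hac hbc
  have hpx : ∀ t ≠ l, p ∣ x t := fun t ht => by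
    rcases hl t ht with rfl | rfl | rfl <;> assumption
  set σ := Equiv.swap l 3
  refine containsSub_graphK_or_graphG_of_forall_ne_three (x := x ∘ σ) (hx.comp σ.injective)
    (fun i j hij => hgcd (σ.injective.ne hij)) ?_ hp ?_
  · rintro ⟨r, hr, hrx⟩
    exact hall ⟨r, hr, fun t => by simpa [σ] using hrx (σ t)⟩
  · intro t ht
    refine hpx _ fun h => ht ?_
    simpa [σ] using congrArg σ h

end FourElements

theorem stmt_14_general (X : Set ℕ)
    (h : ContainsSub (GammaGraph X) (⊤ : SimpleGraph (Fin 4))) :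
    ContainsSub (BGraph X) (completeBipartiteGraph (Fin 1) (Fin 4)) ∨
    ContainsSub (BGraph X) (IncGraph (⊤ : SimpleGraph (Fin 4))) ∨
    ContainsSub (BGraph X) graphK ∨
    ContainsSub (BGraph X) graphG := by
  obtain ⟨x, hx, hadj⟩ := h
  have hgcd : Pairwise fun i j => 1 < Nat.gcd (x i) (x j) := fun i j hij => (hadj i j hij).2
  by_cases hall : ∃ p : ℕ, p.Prime ∧ ∀ t, p ∣ x t
  · obtain ⟨p, hp, hpx⟩ := hall
    exact .inl (BGraph.containsSub_star x hx (mem_rho_of_dvd hp _ (hpx 0)) hpx)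
  by_cases hthree : ∃ p : ℕ, p.Prime ∧ ∃ a b c, a ≠ b ∧ a ≠ c ∧ b ≠ c ∧
      p ∣ x a ∧ p ∣ x b ∧ p ∣ x c
  · obtain ⟨p, hp, a, b, c, hab, hac, hbc, ha, hb, hc⟩ := hthree
    exact .inr (.inr (containsSub_graphK_or_graphG_s14 hx hgcd hall hp hab hac hbc ha hb hc))
  push Not at hthree
  exact .inr (.inl (BGraph.containsSub_incGraph ⊤ x hx (fun _ _ h => hgcd h) hthree))

theorem stmt_14 (X : Set ℕ) (hne : X.Nonempty) (hpos : ∀ x ∈ X, 0 < x)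
    (hX1 : X ≠ {1})
    (h : ContainsSub (GammaGraph X) (⊤ : SimpleGraph (Fin 4))) :
    ContainsSub (BGraph X) (completeBipartiteGraph (Fin 1) (Fin 4)) ∨
    ContainsSub (BGraph X) (IncGraph (⊤ : SimpleGraph (Fin 4))) ∨
    ContainsSub (BGraph X) graphK ∨
    ContainsSub (BGraph X) graphG :=
  stmt_14_general X h
end

section
/- If B(X) contains a subgraph isomorphic to one of the complete bipartite graph K_{1,4}, the incidence graph Inc(K4) of the complete graph K4, the graph 𝒦, or the graph 𝒢, then at least one of Δ(X), Γ(X) contains a complete subgraph K4 on four vertices. -/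
open SimpleGraph

/-!
Four distinct vertices of `B(X)` that pairwise have a common neighbour lie on the same side of
`B(X)`, since every edge joins a prime to an element of `X*`. Two primes with a common neighbour
`x` both divide `x`, hence so does their product; two elements of `X*` with a common neighbour
`p` have `p ∣ gcd`. So such a quadruple is a `K₄` in `Δ(X)` or in `Γ(X)`. Each of the four
given graphs contains such a quadruple: the leaves of `K_{1,4}`, the vertices of `K₄` in its
incidence graph, and the part `{a1, a2, a3, a4}` of `𝒦` and of `𝒢`.
-/

theorem ContainsSub.trans {U V W : Type*} {G : SimpleGraph U} {H : SimpleGraph V}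
    {K : SimpleGraph W} (hGH : ContainsSub G H) (hHK : ContainsSub H K) : ContainsSub G K := by
  obtain ⟨f, hf, hfadj⟩ := hGH
  obtain ⟨g, hg, hgadj⟩ := hHK
  exact ⟨f ∘ g, hf.comp hg, fun u v h => hfadj _ _ (hgadj u v h)⟩

theorem ContainsSub.mono {V W : Type*} {G G' : SimpleGraph V} {H : SimpleGraph W}
    (h : ContainsSub G H) (hle : G ≤ G') : ContainsSub G' H := by
  obtain ⟨f, hf, hadj⟩ := h
  exact ⟨f, hf, fun u v huv => hle (hadj u v huv)⟩

theorem containsSub_comap_of_forall_mem_range {U V W : Type*} {G : SimpleGraph V}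
    {H : SimpleGraph W} {e : U → V} {f : W → V} (hf : Function.Injective f)
    (hadj : ∀ u v, H.Adj u v → G.Adj (f u) (f v)) (hrange : ∀ w, f w ∈ Set.range e) :
    ContainsSub (G.comap e) H := by
  choose g hg using hrange
  have hfg : e ∘ g = f := funext hg
  refine ⟨g, Function.Injective.of_comp (f := e) (hfg ▸ hf), fun u v huv => ?_⟩
  simpa only [comap_adj, hg] using hadj u v huv

namespace SimpleGraph

def commonNeighborGraph {V : Type*} (G : SimpleGraph V) : SimpleGraph V where
  Adj u v := u ≠ v ∧ (G.commonNeighbors u v).Nonempty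
  symm := ⟨fun u v h => ⟨h.1.symm, G.commonNeighbors_symm u v ▸ h.2⟩⟩
  loopless := ⟨fun _ h => h.1 rfl⟩

theorem isLeft_eq_of_commonNeighborGraph_adj {α β : Type*} {G : SimpleGraph (α ⊕ β)}
    (hG : ∀ u v, G.Adj u v → u.isLeft ≠ v.isLeft) {u v : α ⊕ β}
    (h : G.commonNeighborGraph.Adj u v) : u.isLeft = v.isLeft := by
  obtain ⟨-, w, huw, hvw⟩ := h
  have hu := hG u w huw
  have hv := hG v w hvw
  revert hu hv
  cases u.isLeft <;> cases v.isLeft <;> cases w.isLeft <;> decide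

end SimpleGraph

theorem containsSub_top_comap_inl_or_inr {α β W : Type*} [Nonempty W]
    {G : SimpleGraph (α ⊕ β)}
    (hG : ∀ u v, G.Adj u v → u.isLeft = v.isLeft) (h : ContainsSub G (⊤ : SimpleGraph W)) :
    ContainsSub (G.comap Sum.inl) (⊤ : SimpleGraph W) ∨
      ContainsSub (G.comap Sum.inr) (⊤ : SimpleGraph W) := by
  obtain ⟨f, hf, hadj⟩ := h
  obtain ⟨w₀⟩ := ‹Nonempty W›
  have same_side (w : W) : (f w).isLeft = (f w₀).isLeft := by
    by_cases hw : w = w₀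
    · rw [hw]
    · exact hG _ _ (hadj w w₀ hw)
  cases hside : (f w₀).isLeft
  · exact .inr <| containsSub_comap_of_forall_mem_range hf hadj fun w =>
      Set.range_inr ▸ Sum.isLeft_eq_false.mp ((same_side w).trans hside)
  · exact .inl <| containsSub_comap_of_forall_mem_range hf hadj fun w =>
      Set.range_inl ▸ (same_side w).trans hside

theorem ContainsSub.commonNeighborGraph {V W : Type*} {G : SimpleGraph V} {H : SimpleGraph W}
    (h : ContainsSub G H) : ContainsSub G.commonNeighborGraph H.commonNeighborGraph := by
  obtain ⟨f, hf, hadj⟩ := h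
  exact ⟨f, hf, fun u v ⟨hne, w, huw, hvw⟩ =>
    ⟨hf.ne hne, f w, hadj _ _ huw, hadj _ _ hvw⟩⟩

theorem containsSub_commonNeighborGraph_top {V W : Type*} {G : SimpleGraph V} {f : W → V}
    (hf : Function.Injective f) (h : ∀ i j, i ≠ j → ∃ v, G.Adj (f i) v ∧ G.Adj (f j) v) :
    ContainsSub G.commonNeighborGraph (⊤ : SimpleGraph W) :=
  ⟨f, hf, fun i j hij => ⟨hf.ne hij, h i j hij⟩⟩

theorem containsSub_commonNeighborGraph_completeBipartiteGraph (V W : Type*) [Nonempty V] :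
    ContainsSub (completeBipartiteGraph V W).commonNeighborGraph (⊤ : SimpleGraph W) := by
  obtain ⟨v⟩ := ‹Nonempty V›
  exact containsSub_commonNeighborGraph_top Sum.inr_injective fun _ _ _ =>
    ⟨Sum.inl v, by simp, by simp⟩

theorem containsSub_commonNeighborGraph_incGraph {V : Type*} (G : SimpleGraph V) :
    ContainsSub (IncGraph G).commonNeighborGraph G :=
  ⟨Sum.inl, Sum.inl_injective, fun u v huv =>
    ⟨Sum.inl_injective.ne huv.ne, Sum.inr ⟨s(u, v), huv⟩, Sym2.mem_mk_left u v,
      Sym2.mem_mk_right u v⟩⟩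

theorem containsSub_commonNeighborGraph_graphK :
    ContainsSub graphK.commonNeighborGraph (⊤ : SimpleGraph (Fin 4)) := by
  refine containsSub_commonNeighborGraph_top Sum.inl_injective ?_
  simp only [Sum.exists, graphK]
  decide

theorem containsSub_commonNeighborGraph_graphG :
    ContainsSub graphG.commonNeighborGraph (⊤ : SimpleGraph (Fin 4)) := by
  refine containsSub_commonNeighborGraph_top Sum.inl_injective ?_
  simp only [Sum.exists, graphG]
  decide

theorem isLeft_ne_of_bGraph_adj {X : Set ℕ} {u v : ↥(rho X) ⊕ ↥(Xstar X)}
    (h : (BGraph X).Adj u v) : u.isLeft ≠ v.isLeft := by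
  rcases u with p | x <;> rcases v with q | y
  · exact h.elim
  · simp
  · simp
  · exact h.elim

theorem comap_inl_commonNeighborGraph_bGraph_le (X : Set ℕ) :
    (BGraph X).commonNeighborGraph.comap Sum.inl ≤ DeltaGraph X := by
  rintro p q ⟨hne, w, hpw, hqw⟩
  have hpq : p ≠ q := Sum.inl_injective.ne_iff.mp hne
  rcases w with r | x
  · exact hpw.elim
  have hcop : Nat.Coprime p q :=
    (Nat.coprime_primes p.2.1 q.2.1).mpr (Subtype.coe_ne_coe.mpr hpq)
  exact ⟨hpq, x, x.2.1, hcop.mul_dvd_of_dvd_of_dvd hpw hqw⟩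

theorem comap_inr_commonNeighborGraph_bGraph_le (X : Set ℕ) :
    (BGraph X).commonNeighborGraph.comap Sum.inr ≤ GammaGraph X := by
  rintro x y ⟨hne, w, hxw, hyw⟩
  have hxy : x ≠ y := Sum.inr_injective.ne_iff.mp hne
  rcases w with p | z
  · have hgcd : 0 < Nat.gcd x y :=
      Nat.gcd_pos_iff.mpr (by have := Subtype.coe_ne_coe.mpr hxy; omega)
    exact ⟨hxy, p.2.1.one_lt.trans_le (Nat.le_of_dvd hgcd (Nat.dvd_gcd hxw hyw))⟩
  · exact hxw.elim

theorem stmt_15_general (X : Set ℕ)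
    (h : ContainsSub (BGraph X) (completeBipartiteGraph (Fin 1) (Fin 4)) ∨
         ContainsSub (BGraph X) (IncGraph (⊤ : SimpleGraph (Fin 4))) ∨
         ContainsSub (BGraph X) graphK ∨
         ContainsSub (BGraph X) graphG) :
    ContainsSub (DeltaGraph X) (⊤ : SimpleGraph (Fin 4)) ∨
    ContainsSub (GammaGraph X) (⊤ : SimpleGraph (Fin 4)) := by
  have hK4 : ContainsSub (BGraph X).commonNeighborGraph (⊤ : SimpleGraph (Fin 4)) := by
    rcases h with h | h | h | h
    · exact h.commonNeighborGraph.trans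
        (containsSub_commonNeighborGraph_completeBipartiteGraph (Fin 1) (Fin 4))
    · exact h.commonNeighborGraph.trans (containsSub_commonNeighborGraph_incGraph _)
    · exact h.commonNeighborGraph.trans containsSub_commonNeighborGraph_graphK
    · exact h.commonNeighborGraph.trans containsSub_commonNeighborGraph_graphG
  have hside (u v) : (BGraph X).commonNeighborGraph.Adj u v → u.isLeft = v.isLeft :=
    isLeft_eq_of_commonNeighborGraph_adj fun _ _ => isLeft_ne_of_bGraph_adj
  rcases containsSub_top_comap_inl_or_inr hside hK4 with hΔ | hΓ
  · exact .inl (hΔ.mono (comap_inl_commonNeighborGraph_bGraph_le X))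
  · exact .inr (hΓ.mono (comap_inr_commonNeighborGraph_bGraph_le X))

theorem stmt_15 (X : Set ℕ) (hne : X.Nonempty) (hpos : ∀ x ∈ X, 0 < x)
    (hX1 : X ≠ {1})
    (h : ContainsSub (BGraph X) (completeBipartiteGraph (Fin 1) (Fin 4)) ∨
         ContainsSub (BGraph X) (IncGraph (⊤ : SimpleGraph (Fin 4))) ∨
         ContainsSub (BGraph X) graphK ∨
         ContainsSub (BGraph X) graphG) :
    ContainsSub (DeltaGraph X) (⊤ : SimpleGraph (Fin 4)) ∨
    ContainsSub (GammaGraph X) (⊤ : SimpleGraph (Fin 4)) :=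
  stmt_15_general X h
end
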